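/- arXiv:2107.05957 — 4 statements merged into one kernel-verified Lean document; each statement's English description precedes it below -/
import Mathlib

section
/- Let Z be a nonempty closed convex subset of R^d, let F : R^d → R^d be monotone (⟨F(z1) − F(z2), z1 − z2⟩ ≥ 0 for all z1, z2) and L-Lipschitz (‖F(z1) − F(z2)‖ ≤ L‖z1 − z2‖ for all z1, z2), and let 0 < γ ≤ 1/(4L). For any z ∈ Z define the extragradient step u = proj_Z(z − γ F(z)) and z⁺ = proj_Z(z − γ F(u)), where proj_Z is the Euclidean projection onto Z. Then for every w ∈ Z it holds that 2γ⟨F(u), u − w⟩ ≤ ‖z − w‖² − ‖z⁺ − w‖². -/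
open scoped RealInnerProductSpace

private lemma proj_vi {E : Type*} [NormedAddCommGroup E] [InnerProductSpace ℝ E]
    {K : Set E} (hK : Convex ℝ K) (v p : E) (hp : p ∈ K)
    (hmin : ∀ w ∈ K, ‖v - p‖ ≤ ‖v - w‖) : ∀ w ∈ K, ⟪v - p, w - p⟫ ≤ 0 := by
  have hne : Nonempty K := ⟨⟨p, hp⟩⟩
  have heq : ‖v - p‖ = ⨅ w : K, ‖v - w‖ := by
    refine le_antisymm (le_ciInf fun w => hmin w w.2) ?_
    exact ciInf_le ⟨0, fun _ ⟨_, h⟩ => h ▸ norm_nonneg _⟩ (⟨p, hp⟩ : K)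
  exact (norm_eq_iInf_iff_real_inner_le_zero hK hp).1 heq

private lemma three_point {E : Type*} [NormedAddCommGroup E] [InnerProductSpace ℝ E]
    (z p w : E) : 2 * ⟪z - p, p - w⟫ = ‖z - w‖ ^ 2 - ‖p - w‖ ^ 2 - ‖z - p‖ ^ 2 := by
  have h := norm_add_sq_real (z - p) (p - w)
  have : z - p + (p - w) = z - w := by abel
  rw [this] at h
  linarith

/-- one step of the extragradient (extra-step / Mirror Prox) method on a
nonempty closed convex set `Z ⊆ ℝ^d` with a monotone `L`-Lipschitz operator `F` and
stepsize `0 < γ ≤ 1/(4L)` satisfies, for every `w ∈ Z`,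
`2γ⟨F(u), u − w⟩ ≤ ‖z − w‖² − ‖z⁺ − w‖²`. -/
theorem extragradient_one_step_bound
    (d : ℕ) (Z : Set (EuclideanSpace ℝ (Fin d)))
    (hZne : Z.Nonempty) (hZcl : IsClosed Z) (hZcx : Convex ℝ Z)
    (F : EuclideanSpace ℝ (Fin d) → EuclideanSpace ℝ (Fin d))
    (L γ : ℝ) (hL : 0 < L)
    (hmono : ∀ z1 z2, 0 ≤ ⟪F z1 - F z2, z1 - z2⟫)
    (hlip : ∀ z1 z2, ‖F z1 - F z2‖ ≤ L * ‖z1 - z2‖)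
    (hγ0 : 0 < γ) (hγ : γ ≤ 1 / (4 * L))
    -- `P` is the Euclidean projection onto `Z`
    (P : EuclideanSpace ℝ (Fin d) → EuclideanSpace ℝ (Fin d))
    (hP : ∀ v, P v ∈ Z ∧ ∀ w ∈ Z, ‖v - P v‖ ≤ ‖v - w‖)
    (z u zp : EuclideanSpace ℝ (Fin d)) (hz : z ∈ Z)
    (hu : u = P (z - γ • F z)) (hzp : zp = P (z - γ • F u)) :
    ∀ w ∈ Z, 2 * γ * ⟪F u, u - w⟫ ≤ ‖z - w‖ ^ 2 - ‖zp - w‖ ^ 2 := by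
  intro w hw
  have huZ : u ∈ Z := hu ▸ (hP (z - γ • F z)).1
  have hzpZ : zp ∈ Z := hzp ▸ (hP (z - γ • F u)).1
  have hvi1 : ∀ y ∈ Z, ⟪z - γ • F z - u, y - u⟫ ≤ 0 := by
    subst hu; exact proj_vi hZcx _ _ (hP _).1 (hP _).2
  have hvi2 : ∀ y ∈ Z, ⟪z - γ • F u - zp, y - zp⟫ ≤ 0 := by
    subst hzp; exact proj_vi hZcx _ _ (hP _).1 (hP _).2
  have h1 := hvi2 w hw
  have h2 := hvi1 zp hzpZ
  have e1 : ⟪z - γ • F u - zp, w - zp⟫ = ⟪z - zp, w - zp⟫ - γ * ⟪F u, w - zp⟫ := by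
    simp only [inner_sub_left, real_inner_smul_left]; ring
  have e2 : ⟪z - γ • F z - u, zp - u⟫ = ⟪z - u, zp - u⟫ - γ * ⟪F z, zp - u⟫ := by
    simp only [inner_sub_left, real_inner_smul_left]; ring
  have t1 := three_point z zp w
  have t2 := three_point z u zp
  have hsym1 : ⟪z - zp, w - zp⟫ = -⟪z - zp, zp - w⟫ := by
    rw [← inner_neg_right]; congr 1; abel
  have hsym2 : ⟪z - u, zp - u⟫ = -⟪z - u, u - zp⟫ := by
    rw [← inner_neg_right]; congr 1; abel
  -- cross term
  have hcross : ⟪F u - F z, u - zp⟫ ≤ L * ‖u - z‖ * ‖u - zp‖ := by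
    calc ⟪F u - F z, u - zp⟫ ≤ ‖F u - F z‖ * ‖u - zp‖ := real_inner_le_norm _ _
      _ ≤ L * ‖u - z‖ * ‖u - zp‖ := by
          exact mul_le_mul_of_nonneg_right (hlip u z) (norm_nonneg _)
  have hsplit : ⟪F u, u - w⟫ = ⟪F u, zp - w⟫ + ⟪F u - F z, u - zp⟫ + ⟪F z, u - zp⟫ := by
    simp only [inner_sub_left, inner_sub_right]; ring
  have hsplit2 : ⟪F u, zp - w⟫ = -⟪F u, w - zp⟫ := by
    rw [← inner_neg_right]; congr 1; abel
  have hsplit3 : ⟪F z, u - zp⟫ = -⟪F z, zp - u⟫ := by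
    rw [← inner_neg_right]; congr 1; abel
  have hγL : γ * L ≤ 1 / 4 := by
    have h4 : 1 / (4 * L) * L = 1 / 4 := by field_simp
    nlinarith [mul_le_mul_of_nonneg_right hγ hL.le]
  have k1 : -(2 * γ * ⟪F u, w - zp⟫) ≤ ‖z - w‖ ^ 2 - ‖zp - w‖ ^ 2 - ‖z - zp‖ ^ 2 := by
    rw [e1] at h1; linarith
  have k2 : -(2 * γ * ⟪F z, zp - u⟫) ≤ ‖z - zp‖ ^ 2 - ‖u - zp‖ ^ 2 - ‖z - u‖ ^ 2 := by
    rw [e2] at h2; linarith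
  have k3 : 2 * γ * ⟪F u - F z, u - zp⟫ ≤ 2 * γ * (L * ‖u - z‖ * ‖u - zp‖) :=
    mul_le_mul_of_nonneg_left hcross (by positivity)
  have k4 : 2 * γ * (L * ‖u - z‖ * ‖u - zp‖) ≤ (1/2) * (‖u - z‖^2 + ‖u - zp‖^2) := by
    nlinarith [mul_le_mul_of_nonneg_right hγL
        (mul_nonneg (norm_nonneg (u - z)) (norm_nonneg (u - zp))),
      sq_nonneg (‖u - z‖ - ‖u - zp‖)]
  have hnz : ‖u - z‖ = ‖z - u‖ := norm_sub_rev _ _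
  rw [hnz] at k3 k4
  have hfin : 2 * γ * ⟪F u, u - w⟫ = -(2 * γ * ⟪F u, w - zp⟫)
      + 2 * γ * ⟪F u - F z, u - zp⟫ + -(2 * γ * ⟪F z, zp - u⟫) := by
    rw [hsplit, hsplit2, hsplit3]; ring
  linarith [sq_nonneg ‖z - u‖, sq_nonneg ‖u - zp‖]
end

section
/- Let Z be a nonempty closed convex subset of R^d, let F : R^d → R^d be μ-strongly monotone (⟨F(z1) − F(z2), z1 − z2⟩ ≥ μ‖z1 − z2‖² for all z1, z2, with μ > 0) and L-Lipschitz, and let 0 < γ ≤ 1/(4L). Let z* ∈ Z satisfy the variational inequality ⟨F(z*), w − z*⟩ ≥ 0 for all w ∈ Z. Define the extragradient iteration z^{k+1/2} = proj_Z(z^k − γ F(z^k)), z^{k+1} = proj_Z(z^k − γ F(z^{k+1/2})) started from z^0 ∈ Z. Then for every K ≥ 0, ‖z^K − z*‖² ≤ (1 − μγ/2)^K ‖z^0 − z*‖². -/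
/-!
Testing the two projection inequalities of one extragradient step against `z*` and against the
next iterate, and adding them, gives
`‖z^{k+1} − z*‖² ≤ ‖z^k − z*‖² − ¾(‖z^k − z^{k+½}‖² + ‖z^{k+½} − z^{k+1}‖²) − 2γμ‖z^{k+½} − z*‖²`:
strong monotonicity together with the variational inequality controls `⟪F z^{k+½}, z^{k+½} − z*⟫`,
and `γL ≤ ¼` absorbs the Lipschitz error term. Since `‖z^k − z*‖² ≤ 2‖z^k − z^{k+½}‖² +
2‖z^{k+½} − z*‖²` and `μ ≤ L`, this is a contraction by the factor `1 − μγ/2`.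
-/

open scoped RealInnerProductSpace

variable {E : Type*} [NormedAddCommGroup E] [InnerProductSpace ℝ E]

section Projection

variable {Z : Set E} {P : E → E}

theorem inner_sub_proj_le_zero (hZ : Convex ℝ Z)
    (hP : ∀ v, P v ∈ Z ∧ ∀ w ∈ Z, ‖v - P v‖ ≤ ‖v - w‖) (v : E) {w : E} (hw : w ∈ Z) :
    ⟪v - P v, w - P v⟫ ≤ 0 := by
  have hPv := (hP v).1
  have : Nonempty Z := ⟨⟨P v, hPv⟩⟩
  refine (norm_eq_iInf_iff_real_inner_le_zero hZ hPv).1 (le_antisymm ?_ ?_) w hw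
  · exact le_ciInf fun w => (hP v).2 w w.2
  · exact ciInf_le ⟨0, by rintro x ⟨w, rfl⟩; positivity⟩ (⟨P v, hPv⟩ : Z)

theorem norm_proj_sub_sq_le (hZ : Convex ℝ Z)
    (hP : ∀ v, P v ∈ Z ∧ ∀ w ∈ Z, ‖v - P v‖ ≤ ‖v - w‖) (u g : E) {w : E} (hw : w ∈ Z) :
    ‖P (u - g) - w‖ ^ 2 ≤ ‖u - w‖ ^ 2 - ‖u - P (u - g)‖ ^ 2 + 2 * ⟪g, w - P (u - g)⟫ := by
  set p := P (u - g)
  have hproj : ⟪u - g - p, w - p⟫ ≤ 0 := inner_sub_proj_le_zero hZ hP (u - g) hw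
  have hsplit := norm_add_sq_real (u - p) (p - w)
  rw [sub_add_sub_cancel] at hsplit
  have hinner : ⟪u - g - p, w - p⟫ = -⟪u - p, p - w⟫ - ⟪g, w - p⟫ := by
    simp only [inner_sub_left, inner_sub_right]
    ring
  linarith

end Projection

section Operator

variable {F : E → E} {μ L : ℝ}

theorem le_of_stronglyMonotone_of_lipschitz [Nontrivial E]
    (hmono : ∀ x y, μ * ‖x - y‖ ^ 2 ≤ ⟪F x - F y, x - y⟫)
    (hlip : ∀ x y, ‖F x - F y‖ ≤ L * ‖x - y‖) : μ ≤ L := by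
  obtain ⟨x, y, hxy⟩ := exists_pair_ne E
  have hpos : 0 < ‖x - y‖ ^ 2 := pow_pos (norm_pos_iff.mpr (sub_ne_zero.mpr hxy)) 2
  refine le_of_mul_le_mul_right ?_ hpos
  calc μ * ‖x - y‖ ^ 2 ≤ ⟪F x - F y, x - y⟫ := hmono x y
    _ ≤ ‖F x - F y‖ * ‖x - y‖ := real_inner_le_norm _ _
    _ ≤ L * ‖x - y‖ * ‖x - y‖ := by gcongr; exact hlip x y
    _ = L * ‖x - y‖ ^ 2 := by ring

theorem le_inner_sub_of_stronglyMonotone_of_variational {Z : Set E} {zs x : E}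
    (hmono : ∀ x y, μ * ‖x - y‖ ^ 2 ≤ ⟪F x - F y, x - y⟫)
    (hVI : ∀ w ∈ Z, 0 ≤ ⟪F zs, w - zs⟫) (hx : x ∈ Z) :
    μ * ‖x - zs‖ ^ 2 ≤ ⟪F x, x - zs⟫ := by
  have h := hmono x zs
  rw [inner_sub_left] at h
  linarith [hVI x hx]

end Operator

section Extragradient

variable {Z : Set E} {P F : E → E} {μ L γ : ℝ} {zs : E}

theorem extragradient_step_le (hZ : Convex ℝ Z)
    (hP : ∀ v, P v ∈ Z ∧ ∀ w ∈ Z, ‖v - P v‖ ≤ ‖v - w‖)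
    (hmono : ∀ x y, μ * ‖x - y‖ ^ 2 ≤ ⟪F x - F y, x - y⟫)
    (hlip : ∀ x y, ‖F x - F y‖ ≤ L * ‖x - y‖) (hγ : 0 ≤ γ) (hγL : γ * L ≤ 1 / 4)
    (hzs : zs ∈ Z) (hVI : ∀ w ∈ Z, 0 ≤ ⟪F zs, w - zs⟫) {u h p : E}
    (hh : h = P (u - γ • F u)) (hp : p = P (u - γ • F h)) :
    ‖p - zs‖ ^ 2 ≤ ‖u - zs‖ ^ 2 - 3 / 4 * (‖u - h‖ ^ 2 + ‖h - p‖ ^ 2) - 2 * γ * μ * ‖h - zs‖ ^ 2 := by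
  subst hh hp
  set h := P (u - γ • F u)
  set p := P (u - γ • F h)
  have hp_zs : ‖p - zs‖ ^ 2 ≤ ‖u - zs‖ ^ 2 - ‖u - p‖ ^ 2 + 2 * (γ * ⟪F h, zs - p⟫) := by
    simpa [real_inner_smul_left] using norm_proj_sub_sq_le hZ hP u (γ • F h) hzs
  have hh_p : ‖h - p‖ ^ 2 ≤ ‖u - p‖ ^ 2 - ‖u - h‖ ^ 2 + 2 * (γ * ⟪F u, p - h⟫) := by
    simpa [real_inner_smul_left] using norm_proj_sub_sq_le hZ hP u (γ • F u) (hP _).1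
  have hsplit : ⟪F h, zs - p⟫ + ⟪F u, p - h⟫ = -⟪F h, h - zs⟫ + ⟪F h - F u, h - p⟫ := by
    simp only [inner_sub_left, inner_sub_right]
    ring
  have hmono_h : μ * ‖h - zs‖ ^ 2 ≤ ⟪F h, h - zs⟫ :=
    le_inner_sub_of_stronglyMonotone_of_variational hmono hVI (hP _).1
  -- `γL ≤ ¼` and AM-GM `2‖u - h‖‖h - p‖ ≤ ‖u - h‖² + ‖h - p‖²`
  have hlip_h : 2 * γ * ⟪F h - F u, h - p⟫ ≤ 1 / 4 * (‖u - h‖ ^ 2 + ‖h - p‖ ^ 2) := by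
    have hcs : ⟪F h - F u, h - p⟫ ≤ L * ‖u - h‖ * ‖h - p‖ :=
      calc ⟪F h - F u, h - p⟫ ≤ ‖F h - F u‖ * ‖h - p‖ := real_inner_le_norm _ _
        _ ≤ L * ‖h - u‖ * ‖h - p‖ := by gcongr; exact hlip h u
        _ = L * ‖u - h‖ * ‖h - p‖ := by rw [norm_sub_rev h u]
    have hprod : 0 ≤ ‖u - h‖ * ‖h - p‖ := by positivity
    nlinarith [mul_le_mul_of_nonneg_left hcs hγ, mul_le_mul_of_nonneg_right hγL hprod,
      sq_nonneg (‖u - h‖ - ‖h - p‖)]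
  nlinarith [mul_le_mul_of_nonneg_left hmono_h hγ]

theorem extragradient_step_contraction (hZ : Convex ℝ Z)
    (hP : ∀ v, P v ∈ Z ∧ ∀ w ∈ Z, ‖v - P v‖ ≤ ‖v - w‖)
    (hmono : ∀ x y, μ * ‖x - y‖ ^ 2 ≤ ⟪F x - F y, x - y⟫)
    (hlip : ∀ x y, ‖F x - F y‖ ≤ L * ‖x - y‖) (hγ : 0 ≤ γ) (hγL : γ * L ≤ 1 / 4)
    (hμ : 0 ≤ μ) (hμγL : μ * γ ≤ 1 / 4)
    (hzs : zs ∈ Z) (hVI : ∀ w ∈ Z, 0 ≤ ⟪F zs, w - zs⟫) {u h p : E}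
    (hh : h = P (u - γ • F u)) (hp : p = P (u - γ • F h)) :
    ‖p - zs‖ ^ 2 ≤ (1 - μ * γ / 2) * ‖u - zs‖ ^ 2 := by
  have hstep := extragradient_step_le hZ hP hmono hlip hγ hγL hzs hVI hh hp
  have hμγ : 0 ≤ μ * γ := mul_nonneg hμ hγ
  have htri : ‖u - zs‖ ^ 2 ≤ 2 * ‖u - h‖ ^ 2 + 2 * ‖h - zs‖ ^ 2 := by
    have := norm_sub_le_norm_sub_add_norm_sub u h zs
    nlinarith [sq_nonneg (‖u - h‖ - ‖h - zs‖), norm_nonneg (u - zs)]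
  nlinarith [mul_le_mul_of_nonneg_left htri hμγ, mul_le_mul_of_nonneg_right hμγL (sq_nonneg ‖u - h‖)]

end Extragradient

theorem extragradient_linear_convergence_general
    (d : ℕ) (Z : Set (EuclideanSpace ℝ (Fin d)))
    (hZcx : Convex ℝ Z)
    (F : EuclideanSpace ℝ (Fin d) → EuclideanSpace ℝ (Fin d))
    (L γ μ : ℝ) (hμ : 0 < μ)
    (hmono : ∀ z1 z2, μ * ‖z1 - z2‖ ^ 2 ≤ ⟪F z1 - F z2, z1 - z2⟫)
    (hlip : ∀ z1 z2, ‖F z1 - F z2‖ ≤ L * ‖z1 - z2‖)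
    (hγ0 : 0 < γ) (hγ : γ ≤ 1 / (4 * L))
    -- `P` is the Euclidean projection onto `Z`
    (P : EuclideanSpace ℝ (Fin d) → EuclideanSpace ℝ (Fin d))
    (hP : ∀ v, P v ∈ Z ∧ ∀ w ∈ Z, ‖v - P v‖ ≤ ‖v - w‖)
    -- `z*` solves the variational inequality
    (zs : EuclideanSpace ℝ (Fin d)) (hzs : zs ∈ Z)
    (hVI : ∀ w ∈ Z, 0 ≤ ⟪F zs, w - zs⟫)
    -- the extragradient iterates: `zh k = z^{k+1/2}`
    (z zh : ℕ → EuclideanSpace ℝ (Fin d))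
    (hstep1 : ∀ k, zh k = P (z k - γ • F (z k)))
    (hstep2 : ∀ k, z (k + 1) = P (z k - γ • F (zh k))) :
    ∀ K : ℕ, ‖z K - zs‖ ^ 2 ≤ (1 - μ * γ / 2) ^ K * ‖z 0 - zs‖ ^ 2 := by
  rcases subsingleton_or_nontrivial (EuclideanSpace ℝ (Fin d)) with hE | hE
  · intro K
    simp [Subsingleton.elim (z K) zs, Subsingleton.elim (z 0) zs]
  have hL : 0 < 4 * L := one_div_pos.mp (hγ0.trans_le hγ)
  have hγL : γ * L ≤ 1 / 4 := by
    have := (le_div_iff₀ hL).1 hγ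
    linarith
  have hμγL : μ * γ ≤ 1 / 4 := by
    nlinarith [le_of_stronglyMonotone_of_lipschitz hmono hlip]
  intro K
  refine le_geom (u := fun k => ‖z k - zs‖ ^ 2) (by linarith) K fun k _ => ?_
  exact extragradient_step_contraction hZcx hP hmono hlip hγ0.le hγL hμ.le hμγL hzs hVI
    (hstep1 k) (hstep2 k)

/-- the extragradient method on a nonempty closed convex set `Z ⊆ ℝ^d`
with a `μ`-strongly monotone, `L`-Lipschitz operator `F`, stepsize `0 < γ ≤ 1/(4L)`,
and `z*` solving the variational inequality, converges linearly:
`‖z^K − z*‖² ≤ (1 − μγ/2)^K ‖z^0 − z*‖²`. -/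
theorem extragradient_linear_convergence
    (d : ℕ) (Z : Set (EuclideanSpace ℝ (Fin d)))
    (hZne : Z.Nonempty) (hZcl : IsClosed Z) (hZcx : Convex ℝ Z)
    (F : EuclideanSpace ℝ (Fin d) → EuclideanSpace ℝ (Fin d))
    (L γ μ : ℝ) (hL : 0 < L) (hμ : 0 < μ)
    (hmono : ∀ z1 z2, μ * ‖z1 - z2‖ ^ 2 ≤ ⟪F z1 - F z2, z1 - z2⟫)
    (hlip : ∀ z1 z2, ‖F z1 - F z2‖ ≤ L * ‖z1 - z2‖)
    (hγ0 : 0 < γ) (hγ : γ ≤ 1 / (4 * L))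
    -- `P` is the Euclidean projection onto `Z`
    (P : EuclideanSpace ℝ (Fin d) → EuclideanSpace ℝ (Fin d))
    (hP : ∀ v, P v ∈ Z ∧ ∀ w ∈ Z, ‖v - P v‖ ≤ ‖v - w‖)
    -- `z*` solves the variational inequality
    (zs : EuclideanSpace ℝ (Fin d)) (hzs : zs ∈ Z)
    (hVI : ∀ w ∈ Z, 0 ≤ ⟪F zs, w - zs⟫)
    -- the extragradient iterates: `zh k = z^{k+1/2}`
    (z zh : ℕ → EuclideanSpace ℝ (Fin d)) (hz0 : z 0 ∈ Z)
    (hstep1 : ∀ k, zh k = P (z k - γ • F (z k)))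
    (hstep2 : ∀ k, z (k + 1) = P (z k - γ • F (zh k))) :
    ∀ K : ℕ, ‖z K - zs‖ ^ 2 ≤ (1 - μ * γ / 2) ^ K * ‖z 0 - zs‖ ^ 2 :=
  extragradient_linear_convergence_general d Z hZcx F L γ μ hμ hmono hlip hγ0 hγ P hP zs hzs hVI z
    zh hstep1 hstep2
end

section
/- Let X ⊆ R^{n_x} and Y ⊆ R^{n_y} be nonempty compact convex sets and set Z = X × Y, with ‖z − z'‖ ≤ D for all z, z' ∈ Z. Let f : R^{n_x} × R^{n_y} → R be differentiable, convex in x for each fixed y and concave in y for each fixed x, and let the operator F(x,y) = (∇_x f(x,y), −∇_y f(x,y)) be L-Lipschitz. Let 0 < γ ≤ 1/(4L) and run the extragradient iteration z^{k+1/2} = proj_Z(z^k − γ F(z^k)), z^{k+1} = proj_Z(z^k − γ F(z^{k+1/2})) from z^0 ∈ Z, and set z̄_avg^{K+1} = (1/(K+1)) Σ_{k=0}^{K} z^{k+1/2} = (x̄, ȳ). Then gap(z̄_avg^{K+1}) := max_{y'∈Y} f(x̄, y') − min_{x'∈X} f(x', ȳ) ≤ D² / (2γ(K+1)). -/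
open scoped RealInnerProductSpace

/-- The saddle-point operator `F(x,y) = (∇_x f(x,y), −∇_y f(x,y))` on the ℓ₂-product
space `Z = X × Y`. -/
noncomputable def saddleOp (nx ny : ℕ)
    (f : EuclideanSpace ℝ (Fin nx) → EuclideanSpace ℝ (Fin ny) → ℝ) :
    WithLp 2 (EuclideanSpace ℝ (Fin nx) × EuclideanSpace ℝ (Fin ny)) →
      WithLp 2 (EuclideanSpace ℝ (Fin nx) × EuclideanSpace ℝ (Fin ny)) :=
  fun z =>
    (WithLp.equiv 2 _).symm
      (gradient (fun x => f x (WithLp.equiv 2 _ z).2) (WithLp.equiv 2 _ z).1,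
        -gradient (fun y => f (WithLp.equiv 2 _ z).1 y) (WithLp.equiv 2 _ z).2)

/-!
The projection onto the convex set `Z` satisfies `⟪v - P v, w - P v⟫ ≤ 0` for `w ∈ Z`. Applying
this to both half-steps, and absorbing the mismatch `F(z^{k+1/2}) - F(z^k)` by Lipschitz continuity
and `γ L ≤ 1`, gives `γ ⟪F(z^{k+1/2}), z^{k+1/2} - u⟫ ≤ ‖z^k - u‖²/2 - ‖z^{k+1} - u‖²/2` for
every `u ∈ Z`; the sum over `k` telescopes to at most `‖z^0 - u‖²/2 ≤ D²/2`. The first-order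
conditions for convexity in `x` and concavity in `y` give
`f(x_k, y') - f(x', y_k) ≤ ⟪F(z_k), z_k - (x', y')⟫`, and Jensen's inequality carries this
over to the ergodic average.
-/

open Finset

section FirstOrder

variable {E : Type*} [NormedAddCommGroup E] [InnerProductSpace ℝ E] [CompleteSpace E]
  {s : Set E} {g : E → ℝ} {x y : E}

theorem hasDerivAt_comp_lineMap_zero (hg : DifferentiableAt ℝ g x) (y : E) :
    HasDerivAt (g ∘ AffineMap.lineMap (k := ℝ) x y) ⟪gradient g x, y - x⟫ 0 := by
  have hg' : HasFDerivAt g (InnerProductSpace.toDual ℝ E (gradient g x))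
      (AffineMap.lineMap x y (0 : ℝ)) := by
    simpa using hg.hasGradientAt.hasFDerivAt
  simpa only [InnerProductSpace.toDual_apply_apply] using
    hg'.comp_hasDerivAt (0 : ℝ) AffineMap.hasDerivAt_lineMap

theorem ConvexOn.add_inner_gradient_le (hg : ConvexOn ℝ s g) (hgx : DifferentiableAt ℝ g x)
    (hx : x ∈ s) (hy : y ∈ s) : g x + ⟪gradient g x, y - x⟫ ≤ g y := by
  have h := (hg.comp_affineMap (AffineMap.lineMap x y)).le_slope_of_hasDerivAt
    (by simpa using hx) (by simpa using hy) one_pos (hasDerivAt_comp_lineMap_zero hgx y)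
  simp only [slope_def_field, Function.comp_apply, AffineMap.lineMap_apply_zero,
    AffineMap.lineMap_apply_one, sub_zero, div_one] at h
  linarith

theorem ConcaveOn.le_add_inner_gradient (hg : ConcaveOn ℝ s g) (hgx : DifferentiableAt ℝ g x)
    (hx : x ∈ s) (hy : y ∈ s) : g y ≤ g x + ⟪gradient g x, y - x⟫ := by
  have h := (hg.comp_affineMap (AffineMap.lineMap x y)).slope_le_of_hasDerivAt
    (by simpa using hx) (by simpa using hy) one_pos (hasDerivAt_comp_lineMap_zero hgx y)
  simp only [slope_def_field, Function.comp_apply, AffineMap.lineMap_apply_zero,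
    AffineMap.lineMap_apply_one, sub_zero, div_one] at h
  linarith

end FirstOrder

section Extragradient

variable {E : Type*} [NormedAddCommGroup E] [InnerProductSpace ℝ E]

theorem inner_sub_le_zero_of_forall_norm_sub_le {Z : Set E} (hZ : Convex ℝ Z) {v w : E}
    (hw : w ∈ Z) (hmin : ∀ u ∈ Z, ‖v - w‖ ≤ ‖v - u‖) : ∀ u ∈ Z, ⟪v - w, u - w⟫ ≤ 0 := by
  rw [← norm_eq_iInf_iff_real_inner_le_zero hZ hw]
  have : Nonempty Z := ⟨⟨w, hw⟩⟩
  exact le_antisymm (le_ciInf fun u => hmin u u.2)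
    (ciInf_le ⟨0, Set.forall_mem_range.2 fun _ => norm_nonneg _⟩ (⟨w, hw⟩ : Z))

theorem extragradient_step_le_s2 {F : E → E} {Z : Set E} {L γ : ℝ} {a b c u : E}
    (hγ : 0 ≤ γ) (hγL : γ * L ≤ 1) (hlip : ‖F b - F a‖ ≤ L * ‖b - a‖)
    (hb : ∀ w ∈ Z, ⟪a - γ • F a - b, w - b⟫ ≤ 0) (hc : ∀ w ∈ Z, ⟪a - γ • F b - c, w - c⟫ ≤ 0)
    (hcZ : c ∈ Z) (hu : u ∈ Z) :
    γ * ⟪F b, b - u⟫ ≤ ‖a - u‖ ^ 2 / 2 - ‖c - u‖ ^ 2 / 2 := by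
  have hbc : γ * ⟪F a, b - c⟫ ≤ ⟪a - b, b - c⟫ := by
    have h := hb c hcZ
    rw [← neg_sub b c, inner_neg_right, sub_right_comm, inner_sub_left, real_inner_smul_left] at h
    linarith
  have hcu : γ * ⟪F b, c - u⟫ ≤ ⟪a - c, c - u⟫ := by
    have h := hc u hu
    rw [← neg_sub c u, inner_neg_right, sub_right_comm, inner_sub_left, real_inner_smul_left] at h
    linarith
  have hFba : γ * ⟪F b - F a, b - c⟫ ≤ ‖a - b‖ * ‖b - c‖ := by
    have hcs := (real_inner_le_norm _ _).trans
      (mul_le_mul_of_nonneg_right hlip (norm_nonneg (b - c)))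
    rw [norm_sub_rev b a] at hcs
    nlinarith [mul_nonneg (norm_nonneg (a - b)) (norm_nonneg (b - c))]
  have hsplit : ⟪F b, b - u⟫ = ⟪F b, c - u⟫ + ⟪F a, b - c⟫ + ⟪F b - F a, b - c⟫ := by
    rw [inner_sub_left, ← sub_add_sub_cancel b c u, inner_add_right]
    ring
  -- Expanding `‖a - u‖²` through `c` and `‖a - c‖²` through `b` leaves the error term
  -- `-(‖a - b‖ - ‖b - c‖)² / 2 ≤ 0`.
  have hau := norm_add_sq_real (a - c) (c - u)
  have hac := norm_add_sq_real (a - b) (b - c)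
  rw [sub_add_sub_cancel] at hau hac
  nlinarith [sq_nonneg (‖a - b‖ - ‖b - c‖)]

theorem extragradient_sum_inner_le {F : E → E} {Z : Set E} (hZ : Convex ℝ Z) {P : E → E}
    (hP : ∀ v, P v ∈ Z ∧ ∀ w ∈ Z, ‖v - P v‖ ≤ ‖v - w‖) {L γ : ℝ} (hγ : 0 < γ)
    (hγL : γ * L ≤ 1) (hlip : ∀ z₁ z₂, ‖F z₁ - F z₂‖ ≤ L * ‖z₁ - z₂‖) {z zh : ℕ → E}
    (hstep1 : ∀ k, zh k = P (z k - γ • F (z k)))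
    (hstep2 : ∀ k, z (k + 1) = P (z k - γ • F (zh k))) {u : E} (hu : u ∈ Z) (n : ℕ) :
    ∑ k ∈ range n, ⟪F (zh k), zh k - u⟫ ≤ ‖z 0 - u‖ ^ 2 / (2 * γ) := by
  have hproj : ∀ v, ∀ w ∈ Z, ⟪v - P v, w - P v⟫ ≤ 0 := fun v =>
    inner_sub_le_zero_of_forall_norm_sub_le hZ (hP v).1 (hP v).2
  have hstep : ∀ k, γ * ⟪F (zh k), zh k - u⟫ ≤ ‖z k - u‖ ^ 2 / 2 - ‖z (k + 1) - u‖ ^ 2 / 2 :=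
    fun k => extragradient_step_le_s2 hγ.le hγL (hlip _ _) (hstep1 k ▸ hproj _)
      (hstep2 k ▸ hproj _) (hstep2 k ▸ (hP _).1) hu
  have htel : γ * ∑ k ∈ range n, ⟪F (zh k), zh k - u⟫ ≤
      ‖z 0 - u‖ ^ 2 / 2 - ‖z n - u‖ ^ 2 / 2 := by
    rw [mul_sum, ← sum_range_sub' (fun k => ‖z k - u‖ ^ 2 / 2)]
    exact sum_le_sum fun k _ => hstep k
  rw [le_div_iff₀ (by positivity)]
  nlinarith [sq_nonneg ‖z n - u‖]

end Extragradient

section ConvexConcave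

variable {ι E₁ E₂ : Type*} [AddCommGroup E₁] [Module ℝ E₁] [AddCommGroup E₂] [Module ℝ E₂]
  {X : Set E₁} {Y : Set E₂} {f : E₁ → E₂ → ℝ}

theorem sub_le_average_sub_of_convexOn_of_concaveOn {x' : E₁} {y' : E₂}
    (hcvx : ConvexOn ℝ X fun x => f x y') (hccv : ConcaveOn ℝ Y fun y => f x' y)
    {s : Finset ι} (hs : s.Nonempty) {x : ι → E₁} {y : ι → E₂}
    (hx : ∀ i ∈ s, x i ∈ X) (hy : ∀ i ∈ s, y i ∈ Y) :
    f ((#s : ℝ)⁻¹ • ∑ i ∈ s, x i) y' - f x' ((#s : ℝ)⁻¹ • ∑ i ∈ s, y i) ≤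
      (#s : ℝ)⁻¹ * ∑ i ∈ s, (f (x i) y' - f x' (y i)) := by
  have hw0 : ∀ i ∈ s, (0 : ℝ) ≤ (#s : ℝ)⁻¹ := fun _ _ => by positivity
  have hw1 : ∑ _i ∈ s, (#s : ℝ)⁻¹ = 1 := by
    rw [sum_const, nsmul_eq_mul, mul_inv_cancel₀ (Nat.cast_ne_zero.2 hs.card_pos.ne')]
  have hfx := hcvx.map_sum_le hw0 hw1 hx
  have hfy := hccv.le_map_sum hw0 hw1 hy
  simp only [smul_eq_mul, ← mul_sum, ← smul_sum] at hfx hfy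
  rw [sum_sub_distrib, mul_sub]
  linarith

end ConvexConcave

theorem csSup_image_sub_csInf_image_le {α β : Type*} {g : α → ℝ} {h : β → ℝ} {s : Set α}
    {t : Set β} (hs : s.Nonempty) (ht : t.Nonempty) {c : ℝ}
    (H : ∀ a ∈ s, ∀ b ∈ t, g a - h b ≤ c) : sSup (g '' s) - sInf (h '' t) ≤ c := by
  suffices sSup (g '' s) ≤ c + sInf (h '' t) by linarith
  refine csSup_le (hs.image g) (Set.forall_mem_image.2 fun a ha => ?_)
  suffices g a - c ≤ sInf (h '' t) by linarith
  exact le_csInf (ht.image h) (Set.forall_mem_image.2 fun b hb => by linarith [H a ha b hb])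

section Saddle

open WithLp

variable {nx ny : ℕ} {X : Set (EuclideanSpace ℝ (Fin nx))} {Y : Set (EuclideanSpace ℝ (Fin ny))}
  {f : EuclideanSpace ℝ (Fin nx) → EuclideanSpace ℝ (Fin ny) → ℝ}

theorem sub_le_inner_saddleOp
    (hdiff : Differentiable ℝ
      fun p : EuclideanSpace ℝ (Fin nx) × EuclideanSpace ℝ (Fin ny) => f p.1 p.2)
    (hcvx : ∀ y ∈ Y, ConvexOn ℝ X fun x => f x y) (hccv : ∀ x ∈ X, ConcaveOn ℝ Y fun y => f x y)
    {z : WithLp 2 (EuclideanSpace ℝ (Fin nx) × EuclideanSpace ℝ (Fin ny))}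
    (hz : (ofLp z).1 ∈ X ∧ (ofLp z).2 ∈ Y) {x' : EuclideanSpace ℝ (Fin nx)}
    {y' : EuclideanSpace ℝ (Fin ny)} (hx' : x' ∈ X) (hy' : y' ∈ Y) :
    f (ofLp z).1 y' - f x' (ofLp z).2 ≤ ⟪saddleOp nx ny f z, z - toLp 2 (x', y')⟫ := by
  obtain ⟨hx, hy⟩ := hz
  have hfx := (hcvx _ hy).add_inner_gradient_le
    (hdiff.comp (differentiable_id.prodMk (differentiable_const _)) _) hx hx'
  have hfy := (hccv _ hx).le_add_inner_gradient
    (hdiff.comp ((differentiable_const _).prodMk differentiable_id) _) hy hy'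
  rw [← neg_sub, inner_neg_right] at hfx hfy
  simp only [saddleOp, prod_inner_apply, equiv_apply, equiv_symm_apply, ofLp_sub,
    Prod.fst_sub, Prod.snd_sub, inner_neg_left]
  linarith

theorem saddle_gap_le_average_inner_saddleOp {ι : Type*}
    (hdiff : Differentiable ℝ
      fun p : EuclideanSpace ℝ (Fin nx) × EuclideanSpace ℝ (Fin ny) => f p.1 p.2)
    (hcvx : ∀ y ∈ Y, ConvexOn ℝ X fun x => f x y) (hccv : ∀ x ∈ X, ConcaveOn ℝ Y fun y => f x y)
    {s : Finset ι} (hs : s.Nonempty)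
    {w : ι → WithLp 2 (EuclideanSpace ℝ (Fin nx) × EuclideanSpace ℝ (Fin ny))}
    (hw : ∀ i ∈ s, (ofLp (w i)).1 ∈ X ∧ (ofLp (w i)).2 ∈ Y) {x' : EuclideanSpace ℝ (Fin nx)}
    {y' : EuclideanSpace ℝ (Fin ny)} (hx' : x' ∈ X) (hy' : y' ∈ Y) :
    f (ofLp ((#s : ℝ)⁻¹ • ∑ i ∈ s, w i)).1 y' - f x' (ofLp ((#s : ℝ)⁻¹ • ∑ i ∈ s, w i)).2 ≤
      (#s : ℝ)⁻¹ * ∑ i ∈ s, ⟪saddleOp nx ny f (w i), w i - toLp 2 (x', y')⟫ := by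
  simp only [ofLp_smul, ofLp_sum, Prod.smul_fst, Prod.smul_snd, Prod.fst_sum, Prod.snd_sum]
  refine (sub_le_average_sub_of_convexOn_of_concaveOn (hcvx y' hy') (hccv x' hx') hs
    (fun i hi => (hw i hi).1) (fun i hi => (hw i hi).2)).trans ?_
  gcongr with i hi
  exact sub_le_inner_saddleOp hdiff hcvx hccv (hw i hi) hx' hy'

end Saddle

theorem extragradient_gap_convergence_general
    (nx ny : ℕ) (X : Set (EuclideanSpace ℝ (Fin nx))) (Y : Set (EuclideanSpace ℝ (Fin ny)))
    (hXne : X.Nonempty) (hXcx : Convex ℝ X)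
    (hYne : Y.Nonempty) (hYcx : Convex ℝ Y)
    (Z : Set (WithLp 2 (EuclideanSpace ℝ (Fin nx) × EuclideanSpace ℝ (Fin ny))))
    (hZ : Z = {z | (WithLp.equiv 2 _ z).1 ∈ X ∧ (WithLp.equiv 2 _ z).2 ∈ Y})
    (D : ℝ) (hD : ∀ z ∈ Z, ∀ z' ∈ Z, ‖z - z'‖ ≤ D)
    (f : EuclideanSpace ℝ (Fin nx) → EuclideanSpace ℝ (Fin ny) → ℝ)
    (hdiff : Differentiable ℝ (fun p : EuclideanSpace ℝ (Fin nx) × EuclideanSpace ℝ (Fin ny) => f p.1 p.2))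
    (hcvx : ∀ y ∈ Y, ConvexOn ℝ X (fun x => f x y))
    (hccv : ∀ x ∈ X, ConcaveOn ℝ Y (fun y => f x y))
    (L γ : ℝ) (hL : 0 < L)
    (hlip : ∀ z1 z2, ‖saddleOp nx ny f z1 - saddleOp nx ny f z2‖ ≤ L * ‖z1 - z2‖)
    (hγ0 : 0 < γ) (hγ : γ ≤ 1 / (4 * L))
    -- `P` is the Euclidean projection onto `Z`
    (P : WithLp 2 (EuclideanSpace ℝ (Fin nx) × EuclideanSpace ℝ (Fin ny)) →
      WithLp 2 (EuclideanSpace ℝ (Fin nx) × EuclideanSpace ℝ (Fin ny)))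
    (hP : ∀ v, P v ∈ Z ∧ ∀ w ∈ Z, ‖v - P v‖ ≤ ‖v - w‖)
    -- the extragradient iterates: `zh k = z^{k+1/2}`
    (z zh : ℕ → WithLp 2 (EuclideanSpace ℝ (Fin nx) × EuclideanSpace ℝ (Fin ny)))
    (hz0 : z 0 ∈ Z)
    (hstep1 : ∀ k, zh k = P (z k - γ • saddleOp nx ny f (z k)))
    (hstep2 : ∀ k, z (k + 1) = P (z k - γ • saddleOp nx ny f (zh k)))
    (K : ℕ)
    -- the ergodic average `z̄_avg^{K+1} = (x̄, ȳ)`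
    (zavg : WithLp 2 (EuclideanSpace ℝ (Fin nx) × EuclideanSpace ℝ (Fin ny)))
    (havg : zavg = ((K : ℝ) + 1)⁻¹ • ∑ k ∈ Finset.range (K + 1), zh k) :
    sSup ((fun y' => f (WithLp.equiv 2 _ zavg).1 y') '' Y) -
        sInf ((fun x' => f x' (WithLp.equiv 2 _ zavg).2) '' X) ≤
      D ^ 2 / (2 * γ * ((K : ℝ) + 1)) := by
  have hmemZ : ∀ w, w ∈ Z ↔ (WithLp.ofLp w).1 ∈ X ∧ (WithLp.ofLp w).2 ∈ Y := fun w => by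
    rw [hZ]; rfl
  have hZcx : Convex ℝ Z :=
    hZ ▸ (hXcx.prod hYcx).linear_preimage (WithLp.linearEquiv 2 ℝ _).toLinearMap
  have hγL : γ * L ≤ 1 := by
    rw [le_div_iff₀ (by positivity)] at hγ
    linarith
  refine csSup_image_sub_csInf_image_le hYne hXne fun y' hy' x' hx' => ?_
  have hu : WithLp.toLp 2 (x', y') ∈ Z := (hmemZ _).2 ⟨hx', hy'⟩
  have hgap := saddle_gap_le_average_inner_saddleOp hdiff hcvx hccv (w := zh)
    (nonempty_range_add_one (n := K)) (fun k _ => (hmemZ _).1 (hstep1 k ▸ (hP _).1)) hx' hy'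
  have hsum := extragradient_sum_inner_le hZcx hP hγ0 hγL hlip hstep1 hstep2 hu (K + 1)
  have hdist : ‖z 0 - WithLp.toLp 2 (x', y')‖ ^ 2 ≤ D ^ 2 :=
    pow_le_pow_left₀ (norm_nonneg _) (hD _ hz0 _ hu) 2
  rw [card_range, Nat.cast_add_one, ← havg] at hgap
  calc _ ≤ ((K : ℝ) + 1)⁻¹ * ∑ k ∈ range (K + 1),
          ⟪saddleOp nx ny f (zh k), zh k - WithLp.toLp 2 (x', y')⟫ := hgap
    _ ≤ ((K : ℝ) + 1)⁻¹ * (D ^ 2 / (2 * γ)) := by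
      gcongr
      exact hsum.trans (by gcongr)
    _ = D ^ 2 / (2 * γ * ((K : ℝ) + 1)) := by
      field_simp

/-- on a compact convex product domain `Z = X × Y` of diameter at most `D`,
for a differentiable convex-concave `f` whose saddle-point operator `F` is `L`-Lipschitz,
the averaged extragradient iterates satisfy
`gap(z̄_avg^{K+1}) ≤ D²/(2γ(K+1))`. -/
theorem extragradient_gap_convergence
    (nx ny : ℕ) (X : Set (EuclideanSpace ℝ (Fin nx))) (Y : Set (EuclideanSpace ℝ (Fin ny)))
    (hXne : X.Nonempty) (hXcp : IsCompact X) (hXcx : Convex ℝ X)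
    (hYne : Y.Nonempty) (hYcp : IsCompact Y) (hYcx : Convex ℝ Y)
    (Z : Set (WithLp 2 (EuclideanSpace ℝ (Fin nx) × EuclideanSpace ℝ (Fin ny))))
    (hZ : Z = {z | (WithLp.equiv 2 _ z).1 ∈ X ∧ (WithLp.equiv 2 _ z).2 ∈ Y})
    (D : ℝ) (hD : ∀ z ∈ Z, ∀ z' ∈ Z, ‖z - z'‖ ≤ D)
    (f : EuclideanSpace ℝ (Fin nx) → EuclideanSpace ℝ (Fin ny) → ℝ)
    (hdiff : Differentiable ℝ (fun p : EuclideanSpace ℝ (Fin nx) × EuclideanSpace ℝ (Fin ny) => f p.1 p.2))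
    (hcvx : ∀ y ∈ Y, ConvexOn ℝ X (fun x => f x y))
    (hccv : ∀ x ∈ X, ConcaveOn ℝ Y (fun y => f x y))
    (L γ : ℝ) (hL : 0 < L)
    (hlip : ∀ z1 z2, ‖saddleOp nx ny f z1 - saddleOp nx ny f z2‖ ≤ L * ‖z1 - z2‖)
    (hγ0 : 0 < γ) (hγ : γ ≤ 1 / (4 * L))
    -- `P` is the Euclidean projection onto `Z`
    (P : WithLp 2 (EuclideanSpace ℝ (Fin nx) × EuclideanSpace ℝ (Fin ny)) →
      WithLp 2 (EuclideanSpace ℝ (Fin nx) × EuclideanSpace ℝ (Fin ny)))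
    (hP : ∀ v, P v ∈ Z ∧ ∀ w ∈ Z, ‖v - P v‖ ≤ ‖v - w‖)
    -- the extragradient iterates: `zh k = z^{k+1/2}`
    (z zh : ℕ → WithLp 2 (EuclideanSpace ℝ (Fin nx) × EuclideanSpace ℝ (Fin ny)))
    (hz0 : z 0 ∈ Z)
    (hstep1 : ∀ k, zh k = P (z k - γ • saddleOp nx ny f (z k)))
    (hstep2 : ∀ k, z (k + 1) = P (z k - γ • saddleOp nx ny f (zh k)))
    (K : ℕ)
    -- the ergodic average `z̄_avg^{K+1} = (x̄, ȳ)`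
    (zavg : WithLp 2 (EuclideanSpace ℝ (Fin nx) × EuclideanSpace ℝ (Fin ny)))
    (havg : zavg = ((K : ℝ) + 1)⁻¹ • ∑ k ∈ Finset.range (K + 1), zh k) :
    sSup ((fun y' => f (WithLp.equiv 2 _ zavg).1 y') '' Y) -
        sInf ((fun x' => f x' (WithLp.equiv 2 _ zavg).2) '' X) ≤
      D ^ 2 / (2 * γ * ((K : ℝ) + 1)) :=
  extragradient_gap_convergence_general nx ny X Y hXne hXcx hYne hYcx Z hZ D hD f hdiff hcvx hccv L
    γ hL hlip hγ0 hγ P hP z zh hz0 hstep1 hstep2 K zavg havg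
end

section
/- Let Z be a nonempty closed convex subset of R^d, let F : R^d → R^d be μ-strongly monotone (μ > 0) and L-Lipschitz, let z* ∈ Z satisfy ⟨F(z*), w − z*⟩ ≥ 0 for all w ∈ Z, and run the extragradient iteration z^{k+1/2} = proj_Z(z^k − γ F(z^k)), z^{k+1} = proj_Z(z^k − γ F(z^{k+1/2})) from z^0 ∈ Z with stepsize γ = 1/(4L). Then for any ε > 0 with ε < ‖z^0 − z*‖², after K ≥ (8L/μ) · log(‖z^0 − z*‖²/ε) iterations it holds that ‖z^K − z*‖² ≤ ε. -/
open scoped RealInnerProductSpace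

/-!
Adding the variational characterisations of the two projections and estimating the
Lipschitz error term by Young's inequality gives
`‖z⁺ - z*‖² ≤ ‖z - z*‖² - (1 - γ²L²)‖z - z^½‖² - 2γ⟪F z^½, z^½ - z*⟫`.
Strong monotonicity together with the variational inequality at `z*` bounds the last
inner product below by `μ‖z^½ - z*‖²`, and `‖z - z*‖² ≤ 2‖z - z^½‖² + 2‖z^½ - z*‖²` turns
this into the contraction `‖z⁺ - z*‖² ≤ (1 - μ/(4L))‖z - z*‖²` for `γ = 1/(4L)`
(note `μ ≤ L`). Finally `1 - q ≤ exp (-q)` turns geometric decay into the logarithmic bound.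
-/

variable {E : Type*} [NormedAddCommGroup E] [InnerProductSpace ℝ E]

theorem real_inner_sub_le_zero_of_forall_norm_sub_le {K : Set E} (hK : Convex ℝ K) {v u : E}
    (hu : u ∈ K) (hmin : ∀ w ∈ K, ‖v - u‖ ≤ ‖v - w‖) : ∀ w ∈ K, ⟪v - u, w - u⟫ ≤ 0 := by
  refine (norm_eq_iInf_iff_real_inner_le_zero hK hu).mp (le_antisymm ?_ ?_)
  · have : Nonempty K := ⟨⟨u, hu⟩⟩
    exact le_ciInf fun w => hmin w w.2
  · exact ciInf_le ⟨0, Set.forall_mem_range.mpr fun w : K => norm_nonneg (v - w)⟩ ⟨u, hu⟩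

theorem le_of_strongMonotone_of_lipschitz {F : E → E} {μ L : ℝ} {x y : E} (hxy : x ≠ y)
    (hmono : μ * ‖x - y‖ ^ 2 ≤ ⟪F x - F y, x - y⟫) (hlip : ‖F x - F y‖ ≤ L * ‖x - y‖) :
    μ ≤ L := by
  have hpos : 0 < ‖x - y‖ ^ 2 := by positivity [sub_ne_zero.mpr hxy]
  have hinner : ⟪F x - F y, x - y⟫ ≤ L * ‖x - y‖ ^ 2 := by
    calc ⟪F x - F y, x - y⟫ ≤ ‖F x - F y‖ * ‖x - y‖ := real_inner_le_norm _ _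
      _ ≤ L * ‖x - y‖ * ‖x - y‖ := mul_le_mul_of_nonneg_right hlip (norm_nonneg _)
      _ = L * ‖x - y‖ ^ 2 := by ring
  exact le_of_mul_le_mul_right (hmono.trans hinner) hpos

/-- `h₁`, `h₂` are the variational characterisations of `zh = proj (z - γ • F z)` and
`z' = proj (z - γ • F zh)`, tested at `z'` and `zs`. -/
theorem extragradient_norm_sq_le {F : E → E} {L γ : ℝ} {z zh z' zs : E} (hγ : 0 ≤ γ)
    (h₁ : ⟪z - γ • F z - zh, z' - zh⟫ ≤ 0) (h₂ : ⟪z - γ • F zh - z', zs - z'⟫ ≤ 0)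
    (hlip : ‖F z - F zh‖ ≤ L * ‖z - zh‖) :
    ‖z' - zs‖ ^ 2 ≤ ‖z - zs‖ ^ 2 - (1 - γ ^ 2 * L ^ 2) * ‖z - zh‖ ^ 2
      - 2 * γ * ⟪F zh, zh - zs⟫ := by
  have young : 2 * γ * ⟪F z - F zh, z' - zh⟫ ≤ γ ^ 2 * L ^ 2 * ‖z - zh‖ ^ 2 + ‖z' - zh‖ ^ 2 :=
    calc 2 * γ * ⟪F z - F zh, z' - zh⟫ ≤ 2 * (γ * (L * ‖z - zh‖)) * ‖z' - zh‖ := by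
          have := (real_inner_le_norm _ _).trans
            (mul_le_mul_of_nonneg_right hlip (norm_nonneg (z' - zh)))
          nlinarith
      _ ≤ _ := by linarith [two_mul_le_add_sq (γ * (L * ‖z - zh‖)) ‖z' - zh‖]
  simp only [← real_inner_self_eq_norm_sq, inner_sub_left, inner_sub_right,
    real_inner_smul_right, real_inner_comm] at h₁ h₂ young ⊢
  linarith

theorem extragradient_contraction {F : E → E} {μ L γ : ℝ} {z zh z' zs : E}
    (hγ : 0 ≤ γ) (hμ : 0 ≤ μ) (hstep : γ ^ 2 * L ^ 2 + 2 * γ * μ ≤ 1)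
    (h₁ : ⟪z - γ • F z - zh, z' - zh⟫ ≤ 0) (h₂ : ⟪z - γ • F zh - z', zs - z'⟫ ≤ 0)
    (hlip : ‖F z - F zh‖ ≤ L * ‖z - zh‖) (hgap : μ * ‖zh - zs‖ ^ 2 ≤ ⟪F zh, zh - zs⟫) :
    ‖z' - zs‖ ^ 2 ≤ (1 - γ * μ) * ‖z - zs‖ ^ 2 := by
  have hsplit : ‖z - zs‖ ^ 2 ≤ 2 * ‖z - zh‖ ^ 2 + 2 * ‖zh - zs‖ ^ 2 := by
    have := norm_add_le (z - zh) (zh - zs)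
    rw [sub_add_sub_cancel] at this
    nlinarith [norm_nonneg (z - zs), sq_nonneg (‖z - zh‖ - ‖zh - zs‖)]
  have hγμ : 0 ≤ γ * μ := mul_nonneg hγ hμ
  nlinarith [extragradient_norm_sq_le hγ h₁ h₂ hlip, mul_le_mul_of_nonneg_left hsplit hγμ,
    mul_le_mul_of_nonneg_left hgap hγ, mul_nonneg (sub_nonneg.mpr hstep) (sq_nonneg ‖z - zh‖)]

theorem one_sub_pow_mul_le_of_log_div_le {q r ε : ℝ} {K : ℕ} (hq : q ≤ 1) (hr : 0 < r)
    (hε : 0 < ε) (hK : Real.log (r / ε) ≤ q * K) : (1 - q) ^ K * r ≤ ε := by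
  have hpow : (1 - q) ^ K ≤ ε / r :=
    calc (1 - q) ^ K ≤ Real.exp (-q) ^ K :=
          pow_le_pow_left₀ (sub_nonneg.mpr hq) (Real.one_sub_le_exp_neg q) K
      _ = Real.exp (-(q * K)) := by rw [← Real.exp_nat_mul]; ring_nf
      _ ≤ Real.exp (-Real.log (r / ε)) := Real.exp_le_exp.mpr (neg_le_neg hK)
      _ = ε / r := by rw [Real.exp_neg, Real.exp_log (div_pos hr hε), inv_div]
  calc (1 - q) ^ K * r ≤ ε / r * r := mul_le_mul_of_nonneg_right hpow hr.le
    _ = ε := div_mul_cancel₀ ε hr.ne'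

theorem extragradient_iteration_complexity_general
    (d : ℕ) (Z : Set (EuclideanSpace ℝ (Fin d)))
    (hZcx : Convex ℝ Z)
    (F : EuclideanSpace ℝ (Fin d) → EuclideanSpace ℝ (Fin d))
    (L γ μ : ℝ) (hL : 0 < L) (hμ : 0 < μ)
    (hmono : ∀ z1 z2, μ * ‖z1 - z2‖ ^ 2 ≤ ⟪F z1 - F z2, z1 - z2⟫)
    (hlip : ∀ z1 z2, ‖F z1 - F z2‖ ≤ L * ‖z1 - z2‖)
    (hγ : γ = 1 / (4 * L))
    -- `P` is the Euclidean projection onto `Z`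
    (P : EuclideanSpace ℝ (Fin d) → EuclideanSpace ℝ (Fin d))
    (hP : ∀ v, P v ∈ Z ∧ ∀ w ∈ Z, ‖v - P v‖ ≤ ‖v - w‖)
    -- `z*` solves the variational inequality
    (zs : EuclideanSpace ℝ (Fin d)) (hzs : zs ∈ Z)
    (hVI : ∀ w ∈ Z, 0 ≤ ⟪F zs, w - zs⟫)
    -- the extragradient iterates: `zh k = z^{k+1/2}`
    (z zh : ℕ → EuclideanSpace ℝ (Fin d))
    (hstep1 : ∀ k, zh k = P (z k - γ • F (z k)))
    (hstep2 : ∀ k, z (k + 1) = P (z k - γ • F (zh k)))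
    (ε : ℝ) (hε : 0 < ε) (hεlt : ε < ‖z 0 - zs‖ ^ 2)
    (K : ℕ) (hK : (8 * L / μ) * Real.log (‖z 0 - zs‖ ^ 2 / ε) ≤ (K : ℝ)) :
    ‖z K - zs‖ ^ 2 ≤ ε := by
  have hproj v : ∀ w ∈ Z, ⟪v - P v, w - P v⟫ ≤ 0 :=
    real_inner_sub_le_zero_of_forall_norm_sub_le hZcx (hP v).1 (hP v).2
  have hr : 0 < ‖z 0 - zs‖ ^ 2 := hε.trans hεlt
  have hz0_ne : z 0 ≠ zs := by rintro h; simp [h] at hr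
  have hμL : μ ≤ L := le_of_strongMonotone_of_lipschitz hz0_ne (hmono _ _) (hlip _ _)
  have hγμ : γ * μ = μ / (4 * L) := by rw [hγ]; field_simp
  have hcontract k : ‖z (k + 1) - zs‖ ^ 2 ≤ (1 - μ / (4 * L)) * ‖z k - zs‖ ^ 2 := by
    have hgap : μ * ‖zh k - zs‖ ^ 2 ≤ ⟪F (zh k), zh k - zs⟫ := by
      have := hmono (zh k) zs
      rw [inner_sub_left] at this
      linarith [hVI (zh k) (hstep1 k ▸ (hP _).1)]
    have hstep_size : γ ^ 2 * L ^ 2 + 2 * γ * μ ≤ 1 := by rw [hγ]; field_simp; nlinarith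
    rw [← hγμ]
    exact extragradient_contraction (by rw [hγ]; positivity) hμ.le hstep_size
      (hstep1 k ▸ hproj _ _ (hstep2 k ▸ (hP _).1)) (hstep2 k ▸ hproj _ _ hzs) (hlip _ _) hgap
  have hq : μ / (4 * L) ≤ 1 := by rw [div_le_one (by positivity)]; linarith
  have hlog : Real.log (‖z 0 - zs‖ ^ 2 / ε) ≤ μ / (4 * L) * K := by
    have hlog_pos : 0 < Real.log (‖z 0 - zs‖ ^ 2 / ε) := Real.log_pos ((one_lt_div hε).mpr hεlt)
    have : μ / (4 * L) * (8 * L / μ) = 2 := by field_simp; ring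
    nlinarith [mul_le_mul_of_nonneg_left hK (by positivity : 0 ≤ μ / (4 * L))]
  calc ‖z K - zs‖ ^ 2 ≤ (1 - μ / (4 * L)) ^ K * ‖z 0 - zs‖ ^ 2 :=
        le_geom (u := fun k => ‖z k - zs‖ ^ 2) (sub_nonneg.mpr hq) K fun k _ => hcontract k
    _ ≤ ε := one_sub_pow_mul_le_of_log_div_le hq hr hε hlog

/-- the extragradient method with stepsize `γ = 1/(4L)` on a nonempty
closed convex set `Z ⊆ ℝ^d`, with a `μ`-strongly monotone `L`-Lipschitz operator `F` and
`z*` solving the variational inequality, reaches `‖z^K − z*‖² ≤ ε` after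
`K ≥ (8L/μ)·log(‖z^0 − z*‖²/ε)` iterations, for any `0 < ε < ‖z^0 − z*‖²`. -/
theorem extragradient_iteration_complexity
    (d : ℕ) (Z : Set (EuclideanSpace ℝ (Fin d)))
    (hZne : Z.Nonempty) (hZcl : IsClosed Z) (hZcx : Convex ℝ Z)
    (F : EuclideanSpace ℝ (Fin d) → EuclideanSpace ℝ (Fin d))
    (L γ μ : ℝ) (hL : 0 < L) (hμ : 0 < μ)
    (hmono : ∀ z1 z2, μ * ‖z1 - z2‖ ^ 2 ≤ ⟪F z1 - F z2, z1 - z2⟫)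
    (hlip : ∀ z1 z2, ‖F z1 - F z2‖ ≤ L * ‖z1 - z2‖)
    (hγ : γ = 1 / (4 * L))
    -- `P` is the Euclidean projection onto `Z`
    (P : EuclideanSpace ℝ (Fin d) → EuclideanSpace ℝ (Fin d))
    (hP : ∀ v, P v ∈ Z ∧ ∀ w ∈ Z, ‖v - P v‖ ≤ ‖v - w‖)
    -- `z*` solves the variational inequality
    (zs : EuclideanSpace ℝ (Fin d)) (hzs : zs ∈ Z)
    (hVI : ∀ w ∈ Z, 0 ≤ ⟪F zs, w - zs⟫)
    -- the extragradient iterates: `zh k = z^{k+1/2}`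
    (z zh : ℕ → EuclideanSpace ℝ (Fin d)) (hz0 : z 0 ∈ Z)
    (hstep1 : ∀ k, zh k = P (z k - γ • F (z k)))
    (hstep2 : ∀ k, z (k + 1) = P (z k - γ • F (zh k)))
    (ε : ℝ) (hε : 0 < ε) (hεlt : ε < ‖z 0 - zs‖ ^ 2)
    (K : ℕ) (hK : (8 * L / μ) * Real.log (‖z 0 - zs‖ ^ 2 / ε) ≤ (K : ℝ)) :
    ‖z K - zs‖ ^ 2 ≤ ε :=
  extragradient_iteration_complexity_general d Z hZcx F L γ μ hL hμ hmono hlip hγ P hP zs hzs hVI z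
    zh hstep1 hstep2 ε hε hεlt K hK
end
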